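/- Let (π, σ, h) be the data of a deformation retract from a cochain complex M onto a cochain complex N over an additive category. Then: (1) id_M = σ∘π + (d_M∘h + h∘d_M) is a decomposition of id_M into two mutually orthogonal idempotent graded endomorphisms of M; (2) setting h' := h ∘ d_M ∘ h, the triple (π, σ, h') is again the data of a deformation retract from M onto N, and moreover h' ∘ h' = 0. -/
import Mathlib


open CategoryTheory CategoryTheory.Limits CochainComplex CochainComplex.HomComplex

section Aux

variable {C : Type*} [Category C] [Preadditive C]

lemma aux_diff_comp_ofHom {F G : CochainComplex C ℤ} (φ : F ⟶ G) :
    (Cochain.diff F).comp (Cochain.ofHom φ) (add_zero 1) =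
      (Cochain.ofHom φ).comp (Cochain.diff G) (zero_add 1) := by
  ext p q hpq
  simp [Cochain.diff_v]

lemma aux_δ_neg_one {F G : CochainComplex C ℤ} (z : Cochain F G (-1)) :
    δ (-1) 0 z = z.comp (Cochain.diff G) (neg_add_cancel 1) +
      (Cochain.diff F).comp z (show (1:ℤ) + (-1) = 0 by norm_num) := by
  ext p
  rw [δ_v (-1) 0 (by norm_num) z p p (add_zero p) (p-1) (p+1) rfl rfl, Cochain.add_v,
    Cochain.comp_v _ _ (neg_add_cancel 1) p (p-1) p (by omega) (by omega),
    Cochain.comp_v _ _ (show (1:ℤ) + (-1) = 0 by norm_num) p (p+1) p (by omega) (by omega)]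
  simp [Cochain.diff_v]

lemma aux_dd (F : CochainComplex C ℤ) :
    (Cochain.diff F).comp (Cochain.diff F) (show (1:ℤ) + 1 = 2 by norm_num) = 0 := by
  ext p q hpq
  rw [Cochain.comp_v _ _ (show (1:ℤ) + 1 = 2 by norm_num) p (p+1) q (by omega) (by omega)]
  simp [Cochain.diff_v]

lemma aux_δ_diff (F : CochainComplex C ℤ) : δ 1 2 (Cochain.diff F) = 0 := by
  have := Cocycle.δ_eq_zero (Cocycle.diff F) 2
  simpa using this

end Aux

/-- The data of a deformation retract from a `ℤ`-indexed cochain complex `M` onto a cochain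
complex `N`: chain maps `π : M ⟶ N` and `σ : N ⟶ M` together with a degree `-1` graded map
`H` on `M` such that `π ∘ σ = id`, `id_M - σ ∘ π = d ∘ H + H ∘ d`, `π ∘ H = 0` and
`H ∘ σ = 0`. -/
structure DeformationRetract {C : Type*} [Category C] [Preadditive C]
    (M N : CochainComplex C ℤ) where
  π : M ⟶ N
  σ : N ⟶ M
  H : Cochain M M (-1)
  retract : σ ≫ π = 𝟙 N
  homotopy : δ (-1) 0 H = Cochain.ofHom (𝟙 M) - Cochain.ofHom (π ≫ σ)
  H_π : H.comp (Cochain.ofHom π) (add_zero (-1)) = 0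
  σ_H : (Cochain.ofHom σ).comp H (zero_add (-1)) = 0

/-- Given the data `(π, σ, H)` of a deformation retract from `M` onto `N`:
(1) `id_M = σ∘π + (d∘H + H∘d)` is a decomposition of the identity of `M` into two mutually
orthogonal idempotent graded endomorphisms; (2) setting `H' := H ∘ d_M ∘ H`, the triple
`(π, σ, H')` is again the data of a deformation retract from `M` onto `N`, and moreover
`H' ∘ H' = 0`. -/
theorem deformationRetract_idempotents_and_normalized_homotopy
    {C : Type*} [Category C] [Preadditive C] {M N : CochainComplex C ℤ}
    (r : DeformationRetract M N) :
    -- (1) the decomposition into mutually orthogonal idempotents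
    (Cochain.ofHom (r.π ≫ r.σ) + δ (-1) 0 r.H = Cochain.ofHom (𝟙 M)) ∧
    ((Cochain.ofHom (r.π ≫ r.σ)).comp (Cochain.ofHom (r.π ≫ r.σ)) (zero_add 0) =
      Cochain.ofHom (r.π ≫ r.σ)) ∧
    ((δ (-1) 0 r.H).comp (δ (-1) 0 r.H) (zero_add 0) = δ (-1) 0 r.H) ∧
    ((Cochain.ofHom (r.π ≫ r.σ)).comp (δ (-1) 0 r.H) (zero_add 0) = 0) ∧
    ((δ (-1) 0 r.H).comp (Cochain.ofHom (r.π ≫ r.σ)) (zero_add 0) = 0) ∧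
    -- (2) the triple (π, σ, H ∘ d ∘ H) is again a deformation retract, with square zero homotopy
    (∀ H' : Cochain M M (-1),
      H' = r.H.comp ((Cochain.diff M).comp r.H (show (1:ℤ) + (-1) = 0 by norm_num))
          (show (-1:ℤ) + 0 = -1 by norm_num) →
        (δ (-1) 0 H' = Cochain.ofHom (𝟙 M) - Cochain.ofHom (r.π ≫ r.σ)) ∧
        (H'.comp (Cochain.ofHom r.π) (add_zero (-1)) = 0) ∧
        ((Cochain.ofHom r.σ).comp H' (zero_add (-1)) = 0) ∧
        (H'.comp H' (show (-1:ℤ) + (-1) = -2 by norm_num) = (0 : Cochain M M (-2)))) := by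
  -- abbreviation-level facts
  have hee : (Cochain.ofHom (r.π ≫ r.σ)).comp (Cochain.ofHom (r.π ≫ r.σ)) (zero_add 0) =
      Cochain.ofHom (r.π ≫ r.σ) := by
    rw [← Cochain.ofHom_comp]
    simp only [Category.assoc, reassoc_of% r.retract]
  have hHe : r.H.comp (Cochain.ofHom (r.π ≫ r.σ)) (add_zero (-1)) = 0 := by
    rw [Cochain.ofHom_comp, ← Cochain.comp_assoc_of_second_is_zero_cochain, r.H_π,
      Cochain.zero_comp]
  have heH : (Cochain.ofHom (r.π ≫ r.σ)).comp r.H (zero_add (-1)) = 0 := by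
    rw [Cochain.ofHom_comp, Cochain.comp_assoc_of_first_is_zero_cochain, r.σ_H,
      Cochain.comp_zero]
  have hdπ := aux_diff_comp_ofHom r.π
  have hdσ := aux_diff_comp_ofHom r.σ
  -- e ∘ (d ∘ H) = 0
  have heB : (Cochain.ofHom (r.π ≫ r.σ)).comp
      ((Cochain.diff M).comp r.H (show (1:ℤ) + (-1) = 0 by norm_num)) (zero_add 0) = 0 := by
    have h1 : (Cochain.ofHom r.σ).comp
        ((Cochain.diff M).comp r.H (show (1:ℤ) + (-1) = 0 by norm_num)) (zero_add 0) = 0 := by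
      rw [← Cochain.comp_assoc_of_first_is_zero_cochain, ← hdσ,
        Cochain.comp_assoc_of_second_is_zero_cochain, r.σ_H, Cochain.comp_zero]
    rw [Cochain.ofHom_comp, Cochain.comp_assoc_of_first_is_zero_cochain, h1, Cochain.comp_zero]
  -- H ∘ (e ∘ d) = 0
  have hHde : r.H.comp ((Cochain.diff M).comp (Cochain.ofHom (r.π ≫ r.σ)) (add_zero 1))
      (show (-1:ℤ) + 1 = 0 by norm_num) = 0 := by
    rw [Cochain.ofHom_comp, ← Cochain.comp_assoc_of_second_is_zero_cochain, hdπ,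
      Cochain.comp_assoc_of_first_is_zero_cochain,
      ← Cochain.comp_assoc_of_second_is_zero_cochain, r.H_π, Cochain.zero_comp]
  have hsum : r.H.comp (Cochain.diff M) (neg_add_cancel 1) +
      (Cochain.diff M).comp r.H (show (1:ℤ) + (-1) = 0 by norm_num) =
      Cochain.ofHom (𝟙 M) - Cochain.ofHom (r.π ≫ r.σ) := by
    rw [← aux_δ_neg_one, r.homotopy]
  refine ⟨?_, hee, ?_, ?_, ?_, ?_⟩
  · rw [r.homotopy]; abel
  · rw [r.homotopy, Cochain.sub_comp, Cochain.id_comp, Cochain.comp_sub, Cochain.comp_id,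
      hee, sub_self, sub_zero]
  · rw [r.homotopy, Cochain.comp_sub, Cochain.comp_id, hee, sub_self]
  · rw [r.homotopy, Cochain.sub_comp, Cochain.id_comp, hee, sub_self]
  · intro H' hH'
    subst hH'
    have hδK : δ 0 1 ((Cochain.diff M).comp r.H (show (1:ℤ) + (-1) = 0 by norm_num)) =
        (Cochain.diff M).comp (δ (-1) 0 r.H) (show (1:ℤ) + 0 = 1 by norm_num) := by
      rw [δ_comp (Cochain.diff M) r.H (show (1:ℤ) + (-1) = 0 by norm_num) 2 0 1 (by norm_num)
        (by norm_num) (by norm_num), aux_δ_diff, Cochain.zero_comp, smul_zero, add_zero]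
    have hDB : (Cochain.diff M).comp
        ((Cochain.diff M).comp r.H (show (1:ℤ) + (-1) = 0 by norm_num))
        (show (1:ℤ) + 0 = 1 by norm_num) = 0 := by
      rw [← Cochain.comp_assoc (Cochain.diff M) (Cochain.diff M) r.H
        (show (1:ℤ) + 1 = 2 by norm_num) (show (1:ℤ) + (-1) = 0 by norm_num)
        (show (1:ℤ) + 1 + (-1) = 1 by norm_num), aux_dd, Cochain.zero_comp]
    have hAB : (r.H.comp (Cochain.diff M) (neg_add_cancel 1)).comp
        ((Cochain.diff M).comp r.H (show (1:ℤ) + (-1) = 0 by norm_num)) (zero_add 0) = 0 := by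
      rw [Cochain.comp_assoc_of_third_is_zero_cochain, hDB, Cochain.comp_zero]
    have hBeq : (Cochain.diff M).comp r.H (show (1:ℤ) + (-1) = 0 by norm_num) =
        (Cochain.ofHom (𝟙 M) - Cochain.ofHom (r.π ≫ r.σ)) -
          r.H.comp (Cochain.diff M) (neg_add_cancel 1) := by
      rw [← hsum]; abel
    have hBB : ((Cochain.diff M).comp r.H (show (1:ℤ) + (-1) = 0 by norm_num)).comp
        ((Cochain.diff M).comp r.H (show (1:ℤ) + (-1) = 0 by norm_num)) (zero_add 0) =
        (Cochain.diff M).comp r.H (show (1:ℤ) + (-1) = 0 by norm_num) := by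
      nth_rewrite 1 [hBeq]
      rw [Cochain.sub_comp, Cochain.sub_comp, Cochain.id_comp, heB, sub_zero, hAB, sub_zero]
    have hAH : (r.H.comp (Cochain.diff M) (neg_add_cancel 1)).comp r.H
        (show (0:ℤ) + (-1) = -1 by norm_num) =
        r.H.comp ((Cochain.diff M).comp r.H (show (1:ℤ) + (-1) = 0 by norm_num))
          (show (-1:ℤ) + 0 = -1 by norm_num) := by
      rw [Cochain.comp_assoc r.H (Cochain.diff M) r.H (neg_add_cancel 1)
        (show (1:ℤ) + (-1) = 0 by norm_num) (show (-1:ℤ) + 1 + (-1) = -1 by norm_num)]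
    have hBHB : ((Cochain.diff M).comp r.H (show (1:ℤ) + (-1) = 0 by norm_num)).comp
        (r.H.comp ((Cochain.diff M).comp r.H (show (1:ℤ) + (-1) = 0 by norm_num))
          (show (-1:ℤ) + 0 = -1 by norm_num)) (show (0:ℤ) + (-1) = -1 by norm_num) = 0 := by
      nth_rewrite 1 [hBeq]
      rw [Cochain.sub_comp, Cochain.sub_comp, Cochain.id_comp,
        ← Cochain.comp_assoc_of_first_is_zero_cochain, heH, Cochain.zero_comp, sub_zero,
        ← Cochain.comp_assoc_of_first_is_zero_cochain, hAH,
        Cochain.comp_assoc_of_second_is_zero_cochain, hBB, sub_self]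
    refine ⟨?_, ?_, ?_, ?_⟩
    · rw [δ_comp_zero_cochain r.H _ 0 (neg_add_cancel 1), hδK, r.homotopy,
        Cochain.comp_sub, Cochain.comp_id, Cochain.comp_sub, hHde, sub_zero,
        Cochain.sub_comp, Cochain.id_comp, heB, sub_zero]
      exact hsum
    · rw [Cochain.comp_assoc_of_third_is_zero_cochain,
        Cochain.comp_assoc_of_third_is_zero_cochain, r.H_π, Cochain.comp_zero,
        Cochain.comp_zero]
    · rw [← Cochain.comp_assoc_of_first_is_zero_cochain, r.σ_H, Cochain.zero_comp]
    · rw [Cochain.comp_assoc_of_second_is_zero_cochain, hBHB, Cochain.comp_zero]
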